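/- arXiv:2008.11051 — 5 statements merged into one kernel-verified Lean document; each statement's English description precedes it below -/
import Mathlib

section
/- Let n ≥ 1, m ≥ 1, let B₀,…,B_{n−1} and B̃₀,…,B̃_{n−1} be m×m real matrices with 0 ≤ B̃ᵢ ≤ Bᵢ entrywise for i = 0,…,n−1, and consider the monic matrix polynomials B(z) = zⁿI − Σ_{i=0}^{n−1} Bᵢ zⁱ and B̃(z) = zⁿI − Σ_{i=0}^{n−1} B̃ᵢ zⁱ. Then the scalar polynomials det B(z) and det B̃(z) each have a root of maximal modulus which is a nonnegative real number; calling these roots λ and λ̃ respectively (so λ = max{|z| : z ∈ ℂ, det B(z) = 0} is itself a root of det B(z), and similarly for λ̃), one has λ̃ ≤ λ. -/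
open Polynomial Matrix

/-- The scalar polynomial `det (zⁿ I - ∑_{i<n} Bᵢ zⁱ)` over `ℂ`, for an `m×m` real
monic matrix polynomial with coefficients `B i`. -/
noncomputable def detMatPoly (m n : ℕ) (B : Fin n → Matrix (Fin m) (Fin m) ℝ) :
    Polynomial ℂ :=
  Matrix.det
    (((Polynomial.X : Polynomial ℂ) ^ n) • (1 : Matrix (Fin m) (Fin m) (Polynomial ℂ)) -
      ∑ i : Fin n, ((Polynomial.X : Polynomial ℂ) ^ (i : ℕ)) •
        ((B i).map fun x => Polynomial.C (x : ℂ)))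

/-!
The roots of `det B(z)` are the eigenvalues of the block companion matrix `C(B)`, which is
entrywise nonnegative and monotone in `B`; so it suffices to show, for a nonnegative real matrix
`A` with spectral radius `ρ(A)`, that `ρ(A)` is an eigenvalue and that `ρ` is monotone.

For `t > ρ(A)` the resolvent `(t - A)⁻¹ = ∑ₖ Aᵏ / tᵏ⁺¹` converges by Gelfand's formula and is
therefore entrywise nonnegative. Hence `r • u ≤ A u` with `0 ≤ u` forces
`u ≤ (t - r) • (t - A)⁻¹ u`. Taking `t = r` shows `r ≤ ρ(A)` when `u ≠ 0`; for `u = |v|`, with `v`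
an eigenvector of `Ã ≤ A` whose eigenvalue has modulus `ρ(Ã)`, this gives `ρ(Ã) ≤ ρ(A)`.
Taking `r = ρ(A)` and letting `t ↓ ρ(A)` shows that the resolvent is unbounded near `ρ(A)`, so
`ρ(A)` lies in the spectrum.
-/

open Filter Topology
open scoped NNReal ENNReal

attribute [local instance] Matrix.linftyOpNormedRing Matrix.linftyOpNormedAlgebra

theorem spectrum.summable_norm_pow_div_of_spectralRadius_lt {A : Type*} [NormedRing A]
    [NormedAlgebra ℂ A] [CompleteSpace A] (a : A) {r : ℝ≥0} (h : spectralRadius ℂ a < r) :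
    Summable fun k : ℕ => ‖a ^ k‖ / r ^ k := by
  obtain ⟨s, hρs, hsr⟩ := ENNReal.lt_iff_exists_nnreal_btwn.mp h
  have hsr : (s : ℝ) < r := by exact_mod_cast hsr
  have hr : (0 : ℝ) < r := s.2.trans_lt hsr
  refine (summable_geometric_of_lt_one (by positivity) ((div_lt_one hr).2 hsr))
    |>.of_norm_bounded_eventually_nat ?_
  filter_upwards [(spectrum.pow_nnnorm_pow_one_div_tendsto_nhds_spectralRadius a)
    |>.eventually_lt_const hρs, eventually_gt_atTop 0] with k hk hk0
  rw [one_div, ENNReal.rpow_inv_lt_iff (by positivity), ENNReal.rpow_natCast,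
    ← ENNReal.coe_pow, ENNReal.coe_lt_coe, ← NNReal.coe_lt_coe, coe_nnnorm] at hk
  rw [Real.norm_of_nonneg (by positivity), div_pow]
  gcongr
  push_cast at hk
  exact hk.le

theorem spectrum.norm_le_of_spectralRadius_eq {𝕜 A : Type*} [NormedField 𝕜] [Ring A]
    [Algebra 𝕜 A] {a : A} {r : ℝ≥0} (ha : spectralRadius 𝕜 a = r) {z : 𝕜}
    (hz : z ∈ spectrum 𝕜 a) : ‖z‖ ≤ r := by
  have : (‖z‖₊ : ℝ≥0∞) ≤ spectralRadius 𝕜 a := le_iSup₂ (α := ℝ≥0∞) z hz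
  rw [ha] at this
  exact_mod_cast this

namespace Matrix

variable {N : Type*} [Fintype N] [DecidableEq N]

theorem ofReal_mem_spectrum_map_iff (A : Matrix N N ℝ) (r : ℝ) :
    (r : ℂ) ∈ spectrum ℂ (A.map ((↑) : ℝ → ℂ)) ↔ r ∈ spectrum ℝ A := by
  rw [mem_spectrum_iff_isRoot_charpoly, mem_spectrum_iff_isRoot_charpoly,
    ← Complex.ofRealHom_eq_coe, ← isRoot_map_iff Complex.ofRealHom.injective, ← charpoly_map]
  rfl

theorem mem_spectrum_iff_exists_mulVec_eq_smul {K : Type*} [Field K] (A : Matrix N N K)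
    (z : K) : z ∈ spectrum K A ↔ ∃ v ≠ 0, A *ᵥ v = z • v := by
  rw [spectrum.mem_iff, isUnit_iff_isUnit_det, isUnit_iff_ne_zero, not_not,
    ← exists_mulVec_eq_zero_iff]
  simp only [sub_mulVec, Algebra.algebraMap_eq_smul_one, smul_mulVec, one_mulVec, sub_eq_zero,
    eq_comm]

theorem norm_map_ofReal_pow (A : Matrix N N ℝ) (k : ℕ) :
    ‖A.map ((↑) : ℝ → ℂ) ^ k‖ = ‖A ^ k‖ := by
  change ‖Complex.ofRealHom.mapMatrix A ^ k‖ = _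
  rw [← map_pow]
  simp [linfty_opNorm_def]

theorem mem_resolventSet_of_spectralRadius_lt (A : Matrix N N ℝ) {t : ℝ}
    (ht : spectralRadius ℂ (A.map ((↑) : ℝ → ℂ)) < ENNReal.ofReal t) : t ∈ resolventSet ℝ A := by
  have ht0 : 0 ≤ t := (ENNReal.ofReal_pos.mp (pos_of_gt ht)).le
  have hres : (t : ℂ) ∈ resolventSet ℂ (A.map ((↑) : ℝ → ℂ)) :=
    spectrum.mem_resolventSet_of_spectralRadius_lt (by
      rwa [← enorm_eq_nnnorm, ← ofReal_norm, Complex.norm_real, Real.norm_of_nonneg ht0])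
  by_contra h
  exact (ofReal_mem_spectrum_map_iff A t).2 h hres

theorem hasSum_resolvent (A : Matrix N N ℝ) {t : ℝ}
    (ht : spectralRadius ℂ (A.map ((↑) : ℝ → ℂ)) < ENNReal.ofReal t) :
    HasSum (fun k : ℕ => t⁻¹ • (t⁻¹ • A) ^ k) (resolvent A t) := by
  have ht0 : 0 < t := ENNReal.ofReal_pos.mp (pos_of_gt ht)
  set x := t⁻¹ • A
  have hx : Summable (x ^ ·) := by
    refine .of_norm ((spectrum.summable_norm_pow_div_of_spectralRadius_lt _ ht).congr fun k => ?_)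
    rw [_root_.smul_pow, norm_smul, norm_map_ofReal_pow, Real.coe_toNNReal _ ht0.le,
      Real.norm_of_nonneg (by positivity), inv_pow, div_eq_inv_mul]
  have hsub : algebraMap ℝ (Matrix N N ℝ) t - A = t • (1 - x) := by
    rw [smul_sub, smul_smul, mul_inv_cancel₀ ht0.ne', one_smul, Algebra.algebraMap_eq_smul_one]
  let u : (Matrix N N ℝ)ˣ :=
    ⟨t • (1 - x), t⁻¹ • ∑' k, x ^ k,
      by rw [smul_mul_smul_comm, mul_inv_cancel₀ ht0.ne', one_smul, hx.one_sub_mul_tsum_pow],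
      by rw [smul_mul_smul_comm, inv_mul_cancel₀ ht0.ne', one_smul, hx.tsum_pow_mul_one_sub]⟩
  have hR : resolvent A t = t⁻¹ • ∑' k, x ^ k := by
    rw [resolvent, hsub]
    exact Ring.inverse_unit u
  exact hR ▸ hx.hasSum.const_smul _

theorem resolvent_apply_nonneg {A : Matrix N N ℝ} (hA : ∀ i j, 0 ≤ A i j) {t : ℝ}
    (ht : spectralRadius ℂ (A.map ((↑) : ℝ → ℂ)) < ENNReal.ofReal t) (i j : N) :
    0 ≤ resolvent A t i j := by
  have ht0 : 0 ≤ t⁻¹ := inv_nonneg.mpr (ENNReal.ofReal_pos.mp (pos_of_gt ht)).le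
  exact (Pi.hasSum.mp (Pi.hasSum.mp (A.hasSum_resolvent ht) i) j).nonneg fun k =>
    mul_nonneg ht0 (pow_apply_nonneg (fun i j => mul_nonneg ht0 (hA i j)) k i j)

theorem le_smul_resolvent_mulVec {A : Matrix N N ℝ} {r t : ℝ} (ht : t ∈ resolventSet ℝ A)
    (hR : ∀ i j, 0 ≤ resolvent A t i j) {u : N → ℝ} (hu : r • u ≤ A *ᵥ u) :
    u ≤ (t - r) • (resolvent A t *ᵥ u) := by
  set R := resolvent A t
  have hRM : R * (algebraMap ℝ _ t - A) = 1 := Ring.inverse_mul_cancel _ ht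
  have key : (t - r) • (R *ᵥ u) - u = R *ᵥ (A *ᵥ u - r • u) := by
    have : A *ᵥ u - r • u = (t - r) • u - (algebraMap ℝ _ t - A) *ᵥ u := by
      rw [sub_mulVec, Algebra.algebraMap_eq_smul_one, smul_mulVec, one_mulVec]
      module
    rw [this, mulVec_sub, mulVec_mulVec, hRM, one_mulVec, mulVec_smul]
  intro i
  have hnonneg : 0 ≤ (R *ᵥ (A *ᵥ u - r • u)) i :=
    Finset.sum_nonneg fun j _ => mul_nonneg (hR i j) (sub_nonneg.2 (hu j))
  have := congrFun key i
  simp only [Pi.sub_apply] at this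
  linarith

theorem exists_nonneg_smul_le_mulVec_of_mem_spectrum {A : Matrix N N ℝ}
    (hA : ∀ i j, 0 ≤ A i j) {μ : ℂ} (hμ : μ ∈ spectrum ℂ (A.map ((↑) : ℝ → ℂ))) :
    ∃ u : N → ℝ, 0 ≤ u ∧ u ≠ 0 ∧ ‖μ‖ • u ≤ A *ᵥ u := by
  obtain ⟨v, hv0, hv⟩ := (mem_spectrum_iff_exists_mulVec_eq_smul _ _).mp hμ
  refine ⟨fun j => ‖v j‖, fun j => norm_nonneg _,
    fun h => hv0 (funext fun j => norm_eq_zero.mp (congrFun h j)), fun i => ?_⟩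
  calc ‖μ‖ * ‖v i‖ = ‖(A.map ((↑) : ℝ → ℂ) *ᵥ v) i‖ := by
        rw [hv, Pi.smul_apply, smul_eq_mul, norm_mul]
    _ ≤ ∑ j, ‖(A i j : ℂ) * v j‖ := norm_sum_le _ _
    _ = (A *ᵥ fun j => ‖v j‖) i := by
      simp [mulVec, dotProduct, Complex.norm_real, abs_of_nonneg (hA i _)]

theorem ofReal_le_spectralRadius_of_smul_le_mulVec {A : Matrix N N ℝ}
    (hA : ∀ i j, 0 ≤ A i j) {u : N → ℝ} (hu0 : 0 ≤ u) (hu : u ≠ 0) {r : ℝ}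
    (hr : r • u ≤ A *ᵥ u) : ENNReal.ofReal r ≤ spectralRadius ℂ (A.map ((↑) : ℝ → ℂ)) := by
  by_contra! h
  have hle := le_smul_resolvent_mulVec (A.mem_resolventSet_of_spectralRadius_lt h)
    (resolvent_apply_nonneg hA h) hr
  rw [sub_self, zero_smul] at hle
  exact hu (le_antisymm hle hu0)

theorem spectralRadius_map_ofReal_mono [Nonempty N] {A A' : Matrix N N ℝ}
    (hA : ∀ i j, 0 ≤ A i j) (hAA' : ∀ i j, A i j ≤ A' i j) :
    spectralRadius ℂ (A.map ((↑) : ℝ → ℂ)) ≤ spectralRadius ℂ (A'.map ((↑) : ℝ → ℂ)) := by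
  obtain ⟨μ, hμ, hρ⟩ := spectrum.exists_nnnorm_eq_spectralRadius (A.map ((↑) : ℝ → ℂ))
  obtain ⟨u, hu0, hu, hμu⟩ := exists_nonneg_smul_le_mulVec_of_mem_spectrum hA hμ
  rw [← hρ, ← enorm_eq_nnnorm, ← ofReal_norm]
  have hA'u : A *ᵥ u ≤ A' *ᵥ u := fun i =>
    Finset.sum_le_sum fun j _ => mul_le_mul_of_nonneg_right (hAA' i j) (hu0 j)
  exact ofReal_le_spectralRadius_of_smul_le_mulVec (fun i j => (hA i j).trans (hAA' i j)) hu0 hu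
    (hμu.trans hA'u)

theorem exists_spectralRadius_eq_mem_spectrum [Nonempty N] {A : Matrix N N ℝ}
    (hA : ∀ i j, 0 ≤ A i j) :
    ∃ ρ : ℝ≥0, spectralRadius ℂ (A.map ((↑) : ℝ → ℂ)) = ρ ∧
      (ρ : ℂ) ∈ spectrum ℂ (A.map ((↑) : ℝ → ℂ)) := by
  obtain ⟨μ, hμ, hρ⟩ := spectrum.exists_nnnorm_eq_spectralRadius (A.map ((↑) : ℝ → ℂ))
  obtain ⟨u, hu0, hu, hμu⟩ := exists_nonneg_smul_le_mulVec_of_mem_spectrum hA hμ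
  obtain ⟨i, hi⟩ := Function.ne_iff.mp hu
  refine ⟨‖μ‖₊, hρ.symm, ?_⟩
  rw [coe_nnnorm, ofReal_mem_spectrum_map_iff]
  by_contra hμA
  have hres : ‖μ‖ ∈ resolventSet ℝ A := not_not.mp hμA
  have hlim : Tendsto (fun t => (t - ‖μ‖) * (resolvent A t *ᵥ u) i) (𝓝[>] ‖μ‖) (𝓝 0) := by
    have hc : Continuous fun M : Matrix N N ℝ => (M *ᵥ u) i := by fun_prop
    have := ((continuous_sub_right ‖μ‖).tendsto ‖μ‖).mul
      (hc.continuousAt.tendsto.comp (spectrum.hasDerivAt_resolvent_const_left hres).continuousAt)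
    rw [sub_self, zero_mul] at this
    exact this.mono_left nhdsWithin_le_nhds
  have hev : ∀ᶠ t in 𝓝[>] ‖μ‖, u i ≤ (t - ‖μ‖) * (resolvent A t *ᵥ u) i := by
    filter_upwards [self_mem_nhdsWithin] with t (ht : ‖μ‖ < t)
    have hρt : spectralRadius ℂ (A.map ((↑) : ℝ → ℂ)) < ENNReal.ofReal t := by
      rwa [← hρ, ENNReal.coe_lt_ofReal]
    exact le_smul_resolvent_mulVec (A.mem_resolventSet_of_spectralRadius_lt hρt)
      (resolvent_apply_nonneg hA hρt) hμu i
  exact (lt_of_le_of_ne (hu0 i) (Ne.symm hi)).not_ge (ge_of_tendsto hlim hev)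

end Matrix

section MatrixPolynomial

variable {m n : ℕ}

noncomputable def matPolyEval (B : Fin n → Matrix (Fin m) (Fin m) ℝ) (z : ℂ) :
    Matrix (Fin m) (Fin m) ℂ :=
  z ^ n • 1 - ∑ i : Fin n, z ^ (i : ℕ) • (B i).map ((↑) : ℝ → ℂ)

theorem eval_detMatPoly (B : Fin n → Matrix (Fin m) (Fin m) ℝ) (z : ℂ) :
    (detMatPoly m n B).eval z = (matPolyEval B z).det := by
  rw [detMatPoly, ← coe_evalRingHom, RingHom.map_det]
  congr 1
  ext k l
  simp only [RingHom.mapMatrix_apply, map_apply, matPolyEval, Matrix.sub_apply, Matrix.sum_apply,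
    Matrix.smul_apply, one_apply, coe_evalRingHom, eval_sub, eval_finsetSum, smul_eq_mul, eval_mul,
    eval_pow, eval_X, eval_C, apply_ite (eval z), eval_one, eval_zero]

theorem matPolyEval_mulVec_apply (B : Fin n → Matrix (Fin m) (Fin m) ℝ) (z : ℂ)
    (v : Fin m → ℂ) (k : Fin m) :
    (matPolyEval B z *ᵥ v) k =
      z ^ n * v k - ∑ q : Fin n × Fin m, (B q.1 k q.2 : ℂ) * (z ^ (q.1 : ℕ) * v q.2) := by
  rw [matPolyEval, sub_mulVec, smul_mulVec, one_mulVec, sum_mulVec, Pi.sub_apply, Pi.smul_apply,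
    smul_eq_mul, Finset.sum_apply]
  congr 1
  rw [Fintype.sum_prod_type]
  refine Finset.sum_congr rfl fun i _ => ?_
  rw [smul_mulVec, Pi.smul_apply, mulVec, dotProduct, smul_eq_mul, Finset.mul_sum]
  exact Finset.sum_congr rfl fun _ _ => by simp only [map_apply]; ring

/-- Block `(i, i + 1)` is the identity for `i < n`, the last block row is `(B₀ ⋯ Bₙ)`, and all
other blocks vanish. -/
def companion (B : Fin (n + 1) → Matrix (Fin m) (Fin m) ℝ) :
    Matrix (Fin (n + 1) × Fin m) (Fin (n + 1) × Fin m) ℝ :=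
  Matrix.of fun p q =>
    Fin.lastCases (B q.1 p.2 q.2) (fun i => if q = (i.succ, p.2) then 1 else 0) p.1

variable {B : Fin (n + 1) → Matrix (Fin m) (Fin m) ℝ}

theorem companion_nonneg (hB : ∀ i k l, 0 ≤ B i k l) (p q : Fin (n + 1) × Fin m) :
    0 ≤ companion B p q := by
  obtain ⟨i, k⟩ := p
  induction i using Fin.lastCases with
  | last => simpa [companion] using hB _ _ _
  | cast i => simp only [companion, of_apply, Fin.lastCases_castSucc]; split_ifs <;> norm_num

theorem companion_mono {B' : Fin (n + 1) → Matrix (Fin m) (Fin m) ℝ}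
    (hBB' : ∀ i k l, B i k l ≤ B' i k l) (p q : Fin (n + 1) × Fin m) :
    companion B p q ≤ companion B' p q := by
  obtain ⟨i, k⟩ := p
  induction i using Fin.lastCases with
  | last => simpa [companion] using hBB' _ _ _
  | cast i => simp [companion]

theorem companion_mulVec_castSucc (w : Fin (n + 1) × Fin m → ℂ) (i : Fin n) (k : Fin m) :
    ((companion B).map ((↑) : ℝ → ℂ) *ᵥ w) (i.castSucc, k) = w (i.succ, k) := by
  simp [companion, mulVec, dotProduct, apply_ite]

theorem companion_mulVec_last (w : Fin (n + 1) × Fin m → ℂ) (k : Fin m) :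
    ((companion B).map ((↑) : ℝ → ℂ) *ᵥ w) (Fin.last n, k) = ∑ q, (B q.1 k q.2 : ℂ) * w q := by
  simp [companion, mulVec, dotProduct]

def powStack (z : ℂ) (v : Fin m → ℂ) : Fin (n + 1) × Fin m → ℂ :=
  fun q => z ^ (q.1 : ℕ) * v q.2

theorem eq_powStack_of_companion_mulVec_eq_smul {z : ℂ} {w : Fin (n + 1) × Fin m → ℂ}
    (hw : (companion B).map ((↑) : ℝ → ℂ) *ᵥ w = z • w) : w = powStack z fun l => w (0, l) := by
  ext ⟨j, l⟩
  induction j using Fin.induction with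
  | zero => simp [powStack]
  | succ i ih =>
    rw [← companion_mulVec_castSucc (B := B) w i l, hw, Pi.smul_apply, ih]
    simp only [powStack, Fin.val_succ, Fin.val_castSucc, smul_eq_mul, pow_succ']
    ring

theorem companion_mulVec_powStack_eq_smul_iff (z : ℂ) (v : Fin m → ℂ) :
    (companion B).map ((↑) : ℝ → ℂ) *ᵥ powStack z v = z • powStack z v ↔
      matPolyEval B z *ᵥ v = 0 := by
  rw [funext_iff, funext_iff, Prod.forall, Fin.forall_fin_succ']
  simp only [companion_mulVec_castSucc, companion_mulVec_last, matPolyEval_mulVec_apply,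
    powStack, Pi.smul_apply, smul_eq_mul, Fin.val_succ, Fin.val_castSucc, Fin.val_last,
    Pi.zero_apply, sub_eq_zero, pow_succ, mul_assoc, mul_left_comm _ z, implies_true, true_and]
  exact forall_congr' fun _ => eq_comm

theorem mem_spectrum_companion_iff (z : ℂ) :
    z ∈ spectrum ℂ ((companion B).map ((↑) : ℝ → ℂ)) ↔ (matPolyEval B z).det = 0 := by
  rw [mem_spectrum_iff_exists_mulVec_eq_smul, ← exists_mulVec_eq_zero_iff]
  constructor
  · rintro ⟨w, hw0, hw⟩
    refine ⟨fun l => w (0, l), fun h => hw0 ?_, ?_⟩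
    · rw [eq_powStack_of_companion_mulVec_eq_smul hw, h]
      ext; simp [powStack]
    · rw [← companion_mulVec_powStack_eq_smul_iff, ← eq_powStack_of_companion_mulVec_eq_smul hw]
      exact hw
  · rintro ⟨v, hv0, hv⟩
    refine ⟨powStack z v, fun h => hv0 (funext fun l => ?_),
      (companion_mulVec_powStack_eq_smul_iff z v).2 hv⟩
    simpa [powStack] using congrFun h (0, l)

end MatrixPolynomial

theorem eval_detMatPoly_eq_zero_iff {m n : ℕ} (B : Fin (n + 1) → Matrix (Fin m) (Fin m) ℝ)
    (z : ℂ) :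
    (detMatPoly m (n + 1) B).eval z = 0 ↔ z ∈ spectrum ℂ ((companion B).map ((↑) : ℝ → ℂ)) := by
  rw [eval_detMatPoly, mem_spectrum_companion_iff]

/-- if `0 ≤ B̃ᵢ ≤ Bᵢ` entrywise, then `det B(z)` and `det B̃(z)` each have a
nonnegative real root of maximal modulus, `λ` and `λ̃` respectively, and `λ̃ ≤ λ`. -/
theorem stmt0 (m n : ℕ) (hm : 1 ≤ m) (hn : 1 ≤ n)
    (B Bt : Fin n → Matrix (Fin m) (Fin m) ℝ)
    (hBt0 : ∀ i k l, 0 ≤ Bt i k l)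
    (hle : ∀ i k l, Bt i k l ≤ B i k l) :
    ∃ lam lamt : ℝ,
      0 ≤ lam ∧ 0 ≤ lamt ∧
      (detMatPoly m n B).eval (lam : ℂ) = 0 ∧
      (∀ z : ℂ, (detMatPoly m n B).eval z = 0 → ‖z‖ ≤ lam) ∧
      (detMatPoly m n Bt).eval (lamt : ℂ) = 0 ∧
      (∀ z : ℂ, (detMatPoly m n Bt).eval z = 0 → ‖z‖ ≤ lamt) ∧
      lamt ≤ lam := by
  obtain ⟨n, rfl⟩ : ∃ k, n = k + 1 := ⟨n - 1, by omega⟩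
  have : Nonempty (Fin (n + 1) × Fin m) := ⟨(0, ⟨0, hm⟩)⟩
  have hB0 : ∀ i k l, 0 ≤ B i k l := fun i k l => (hBt0 i k l).trans (hle i k l)
  obtain ⟨ρ, hρ, hρσ⟩ := exists_spectralRadius_eq_mem_spectrum (companion_nonneg hB0)
  obtain ⟨ρt, hρt, hρtσ⟩ := exists_spectralRadius_eq_mem_spectrum (companion_nonneg hBt0)
  refine ⟨ρ, ρt, ρ.2, ρt.2, (eval_detMatPoly_eq_zero_iff B _).2 hρσ,
    fun z hz => spectrum.norm_le_of_spectralRadius_eq hρ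
      ((eval_detMatPoly_eq_zero_iff B z).1 hz),
    (eval_detMatPoly_eq_zero_iff Bt _).2 hρtσ,
    fun z hz => spectrum.norm_le_of_spectralRadius_eq hρt
      ((eval_detMatPoly_eq_zero_iff Bt z).1 hz), ?_⟩
  have hmono := spectralRadius_map_ofReal_mono (companion_nonneg hBt0) (companion_mono hle)
  rw [hρ, hρt] at hmono
  exact_mod_cast hmono
end

section
/- Let Aᵢ and Ãᵢ, for i = −1, 0, 1, …, be m×m real matrices with nonnegative entries such that Ãᵢ ≤ Aᵢ entrywise for all i ≥ −1 and (Σ_{i=−1}^∞ Aᵢ)·1 ≤ 1 entrywise. If G is the minimal nonnegative solution of X = Σ_{i=0}^∞ A_{i−1} Xⁱ and H is the minimal nonnegative solution of X = Σ_{i=0}^∞ Ã_{i−1} Xⁱ, then H ≤ G entrywise. -/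
open Matrix

/-- Entrywise order on square real matrices. -/
def Mle {m : ℕ} (X Y : Matrix (Fin m) (Fin m) ℝ) : Prop := ∀ i j, X i j ≤ Y i j

/-- `G` is the minimal nonnegative solution of `X = ∑_{i=0}^∞ A_{i-1} Xⁱ`, where
`A i` denotes the coefficient `A_{i-1}` of the paper (index shifted by one). -/
def IsMinSol {m : ℕ} (A : ℕ → Matrix (Fin m) (Fin m) ℝ)
    (G : Matrix (Fin m) (Fin m) ℝ) : Prop :=
  Mle 0 G ∧ Summable (fun i => A i * G ^ i) ∧ G = ∑' i, A i * G ^ i ∧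
    ∀ Y, Mle 0 Y → Summable (fun i => A i * Y ^ i) → Y = ∑' i, A i * Y ^ i → Mle G Y

/-! A nonnegative solution `L ≤ G` of the equation with coefficients `Ãᵢ` is obtained by
Knaster–Tarski: `X ↦ ∑ Ãᵢ Xⁱ` is monotone on the order interval `[0, G]` and maps it into
itself, because `∑ Ãᵢ Xⁱ ≤ ∑ Aᵢ Gⁱ = G` there. Minimality of `H` then gives `H ≤ L ≤ G`. -/

theorem exists_fixedPoint_mem_Icc {α : Type*} [ConditionallyCompleteLattice α] {a b : α}
    (hab : a ≤ b) {f : α → α} (hmaps : Set.MapsTo f (Set.Icc a b) (Set.Icc a b))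
    (hmono : MonotoneOn f (Set.Icc a b)) : ∃ x ∈ Set.Icc a b, f x = x := by
  have : Fact (a ≤ b) := ⟨hab⟩
  let g : Set.Icc a b →o Set.Icc a b :=
    ⟨hmaps.restrict f _ _, fun x y hxy => hmono x.2 y.2 hxy⟩
  exact ⟨g.lfp, g.lfp.2, congrArg Subtype.val g.map_lfp⟩

namespace Mle

variable {m : ℕ} {X Y Z B B' : Matrix (Fin m) (Fin m) ℝ}

protected theorem rfl : Mle X X := fun _ _ => le_rfl

protected theorem trans (hXY : Mle X Y) (hYZ : Mle Y Z) : Mle X Z :=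
  fun i j => (hXY i j).trans (hYZ i j)

theorem mul (hB0 : Mle 0 B) (hB : Mle B B') (hX0 : Mle 0 X) (hX : Mle X Y) :
    Mle (B * X) (B' * Y) := fun k j => by
  rw [mul_apply, mul_apply]
  exact Finset.sum_le_sum fun l _ =>
    mul_le_mul (hB k l) (hX l j) (hX0 l j) ((hB0 k l).trans (hB k l))

theorem zero_mul (hB0 : Mle 0 B) (hX0 : Mle 0 X) : Mle 0 (B * X) := by
  simpa using mul Mle.rfl hB0 Mle.rfl hX0

theorem zero_pow (hX0 : Mle 0 X) (i : ℕ) : Mle 0 (X ^ i) := by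
  induction i with
  | zero => intro k j; by_cases h : k = j <;> simp [h]
  | succ n ih => rw [pow_succ]; exact zero_mul ih hX0

theorem pow (hX0 : Mle 0 X) (hX : Mle X Y) (i : ℕ) : Mle (X ^ i) (Y ^ i) := by
  induction i with
  | zero => exact Mle.rfl
  | succ n ih => rw [pow_succ, pow_succ]; exact mul (zero_pow hX0 n) ih hX0 hX

theorem summable {f g : ℕ → Matrix (Fin m) (Fin m) ℝ} (hf0 : ∀ i, Mle 0 (f i))
    (hfg : ∀ i, Mle (f i) (g i)) (hg : Summable g) : Summable f :=
  Pi.summable.2 fun k => Pi.summable.2 fun j =>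
    (Pi.summable.1 (Pi.summable.1 hg k) j).of_nonneg_of_le (fun i => hf0 i k j)
      (fun i => hfg i k j)

theorem tsum {f g : ℕ → Matrix (Fin m) (Fin m) ℝ} (hfg : ∀ i, Mle (f i) (g i))
    (hf : Summable f) (hg : Summable g) : Mle (∑' i, f i) (∑' i, g i) :=
  Summable.tsum_le_tsum (α := Fin m → Fin m → ℝ) hfg hf hg

theorem zero_tsum {f : ℕ → Matrix (Fin m) (Fin m) ℝ} (hf0 : ∀ i, Mle 0 (f i)) :
    Mle 0 (∑' i, f i) :=
  tsum_nonneg (α := Fin m → Fin m → ℝ) hf0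

theorem exists_fixedPoint {G : Matrix (Fin m) (Fin m) ℝ}
    {f : Matrix (Fin m) (Fin m) ℝ → Matrix (Fin m) (Fin m) ℝ} (hG0 : Mle 0 G)
    (hmaps : ∀ X, Mle 0 X → Mle X G → Mle 0 (f X) ∧ Mle (f X) G)
    (hmono : ∀ X Y, Mle 0 X → Mle X Y → Mle Y G → Mle (f X) (f Y)) :
    ∃ L, Mle 0 L ∧ Mle L G ∧ f L = L := by
  obtain ⟨L, hL, hfix⟩ := exists_fixedPoint_mem_Icc (α := Fin m → Fin m → ℝ) hG0
    (f := f) (fun X hX => hmaps X hX.1 hX.2) (fun X hX Y hY hXY => hmono X Y hX.1 hXY hY.2)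
  exact ⟨L, hL.1, hL.2, hfix⟩

end Mle

section PowerSeries

variable {m : ℕ} {A B : ℕ → Matrix (Fin m) (Fin m) ℝ} {X Y : Matrix (Fin m) (Fin m) ℝ}

theorem summable_mul_pow_of_mle (hA0 : ∀ i, Mle 0 (A i)) (hAB : ∀ i, Mle (A i) (B i))
    (hX0 : Mle 0 X) (hXY : Mle X Y) (hB : Summable fun i => B i * Y ^ i) :
    Summable fun i => A i * X ^ i :=
  Mle.summable (fun i => (hA0 i).zero_mul (hX0.zero_pow i))
    (fun i => (hA0 i).mul (hAB i) (hX0.zero_pow i) (hX0.pow hXY i)) hB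

theorem tsum_mul_pow_mle (hA0 : ∀ i, Mle 0 (A i)) (hAB : ∀ i, Mle (A i) (B i))
    (hX0 : Mle 0 X) (hXY : Mle X Y) (hB : Summable fun i => B i * Y ^ i) :
    Mle (∑' i, A i * X ^ i) (∑' i, B i * Y ^ i) :=
  Mle.tsum (fun i => (hA0 i).mul (hAB i) (hX0.zero_pow i) (hX0.pow hXY i))
    (summable_mul_pow_of_mle hA0 hAB hX0 hXY hB) hB

end PowerSeries

theorem stmt1_general (m : ℕ)
    (A At : ℕ → Matrix (Fin m) (Fin m) ℝ)
    (hAt0 : ∀ i, Mle 0 (At i))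
    (hle : ∀ i, Mle (At i) (A i))
    (G H : Matrix (Fin m) (Fin m) ℝ)
    (hG : IsMinSol A G) (hH : IsMinSol At H) :
    Mle H G := by
  obtain ⟨hG0, hGsum, hGeq, -⟩ := hG
  have hsum : ∀ X, Mle 0 X → Mle X G → Summable fun i => At i * X ^ i :=
    fun X hX0 hXG => summable_mul_pow_of_mle hAt0 hle hX0 hXG hGsum
  obtain ⟨L, hL0, hLG, hLfix⟩ := Mle.exists_fixedPoint
    (f := fun X => ∑' i, At i * X ^ i) hG0
    (fun X hX0 hXG => ⟨Mle.zero_tsum fun i => (hAt0 i).zero_mul (hX0.zero_pow i),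
      hGeq ▸ tsum_mul_pow_mle hAt0 hle hX0 hXG hGsum⟩)
    (fun X Y hX0 hXY hYG =>
      tsum_mul_pow_mle hAt0 (fun _ => Mle.rfl) hX0 hXY (hsum Y (hX0.trans hXY) hYG))
  exact (hH.2.2.2 L hL0 (hsum L hL0 hLG) hLfix.symm).trans hLG

/-- comparison of minimal nonnegative solutions.  Here `A i` and `At i`
stand for `A_{i-1}` and `Ã_{i-1}` of the paper, `i = 0, 1, 2, …`. -/
theorem stmt1 (m : ℕ) (hm : 1 ≤ m)
    (A At : ℕ → Matrix (Fin m) (Fin m) ℝ)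
    (hA0 : ∀ i, Mle 0 (A i)) (hAt0 : ∀ i, Mle 0 (At i))
    (hle : ∀ i, Mle (At i) (A i))
    (hsum : Summable A)
    (hrow : ∀ k, ∑ j, (∑' i, A i) k j ≤ 1)
    (G H : Matrix (Fin m) (Fin m) ℝ)
    (hG : IsMinSol A G) (hH : IsMinSol At H) :
    Mle H G :=
  stmt1_general m A At hAt0 hle G H hG hH
end

section
/- Let G, X_k, X_{k+1} be m×m matrices (for which all series below converge entrywise) such that G = Σ_{ℓ=−1}^q A_ℓ(G) G^{ℓ+1} and X_{k+1} = Σ_{ℓ=−1}^q A_ℓ(X_k) X_{k+1}^{ℓ+1}. Set E_k = G − X_k and E_{k+1} = G − X_{k+1}. Then E_{k+1} = Σ_{ℓ=0}^q A_ℓ(G) Σ_{j=0}^ℓ G^j E_{k+1} X_{k+1}^{ℓ−j} + Σ_{ℓ=−1}^q Σ_{i=1}^∞ A_{ℓ,i} Σ_{j=0}^{i−1} G^j E_k X_k^{i−j−1} X_{k+1}^{ℓ+1}. -/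
/-!
Subtracting the equation for `X_{k+1}` from the one for `G` gives
`G - X_{k+1} = ∑_ℓ (A_ℓ(G) G^{ℓ+1} - A_ℓ(X_k) X_{k+1}^{ℓ+1})`, and each term splits as
`A_ℓ(G) (G^{ℓ+1} - X_{k+1}^{ℓ+1}) + (A_ℓ(G) - A_ℓ(X_k)) X_{k+1}^{ℓ+1}`. Both differences are
expanded by the noncommutative telescoping identity `X^n - Y^n = ∑_j X^j (X - Y) Y^{n-1-j}`,
the second one termwise inside the power series.
-/

open Matrix Finset

section Telescoping

variable {R : Type*} [Ring R]

theorem pow_sub_pow_eq_sum_pow_mul_sub_mul_pow (X Y : R) (n : ℕ) :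
    X ^ n - Y ^ n = ∑ j ∈ range n, X ^ j * (X - Y) * Y ^ (n - 1 - j) := by
  induction n with
  | zero => simp
  | succ n ih =>
    have hshift : ∀ j ∈ range n, X ^ j * (X - Y) * Y ^ (n + 1 - 1 - j)
        = X ^ j * (X - Y) * Y ^ (n - 1 - j) * Y := fun j hj => by
      rw [mul_assoc _ (Y ^ _), ← pow_succ]
      have hjn := mem_range.mp hj
      congr 2
      omega
    rw [sum_range_succ, sum_congr rfl hshift, ← sum_mul, ← ih, Nat.add_sub_cancel, Nat.sub_self,
      pow_zero, mul_one, pow_succ, pow_succ]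
    noncomm_ring

variable [TopologicalSpace R]

theorem hasSum_mul_pow_sub_mul_pow [IsTopologicalAddGroup R] {a : ℕ → R} {X Y : R}
    (hX : Summable fun i => a i * X ^ i) (hY : Summable fun i => a i * Y ^ i) :
    HasSum (fun i => a (i + 1) * ∑ j ∈ range (i + 1), X ^ j * (X - Y) * Y ^ (i - j))
      (∑' i, a i * X ^ i - ∑' i, a i * Y ^ i) := by
  have hdiff := hX.hasSum.sub hY.hasSum
  rw [← hasSum_nat_add_iff' 1] at hdiff
  simpa [← mul_sub, pow_sub_pow_eq_sum_pow_mul_sub_mul_pow X Y (_ + 1)] using hdiff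

theorem tsum_mul_pow_mul_pow_sub_tsum_mul_pow_mul_pow [IsTopologicalRing R] [T2Space R]
    {a : ℕ → R} {X Y : R} (hX : Summable fun i => a i * X ^ i)
    (hY : Summable fun i => a i * Y ^ i) (Z : R) (ℓ : ℕ) :
    (∑' i, a i * X ^ i) * X ^ ℓ - (∑' i, a i * Y ^ i) * Z ^ ℓ =
      (∑' i, a i * X ^ i) * ∑ j ∈ range ℓ, X ^ j * (X - Z) * Z ^ (ℓ - 1 - j) +
        ∑' i, a (i + 1) * (∑ j ∈ range (i + 1), X ^ j * (X - Y) * Y ^ (i - j)) * Z ^ ℓ := by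
  rw [((hasSum_mul_pow_sub_mul_pow hX hY).mul_right (Z ^ ℓ)).tsum_eq,
    ← pow_sub_pow_eq_sum_pow_mul_sub_mul_pow]
  noncomm_ring

end Telescoping

/-- Indices are shifted by one: `p = q + 1`, `Aℓ ℓ i` is `A_{ℓ-1,i}`, and `G ^ ℓ` stands for
`G^{(ℓ-1)+1}`. -/
theorem stmt3_general (m : ℕ) (p : ℕ)
    (Aℓ : ℕ → ℕ → Matrix (Fin m) (Fin m) ℝ)
    (G Xk Xk1 : Matrix (Fin m) (Fin m) ℝ)
    -- all series occurring converge entrywise: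
    (hsG : ∀ ℓ, Summable (fun i => Aℓ ℓ i * G ^ i))
    (hsX : ∀ ℓ, Summable (fun i => Aℓ ℓ i * Xk ^ i))
    -- `G = ∑_{ℓ=-1}^q A_ℓ(G) G^{ℓ+1}` :
    (hGeq : G = ∑ ℓ ∈ Finset.range (p + 1), (∑' i, Aℓ ℓ i * G ^ i) * G ^ ℓ)
    -- `X_{k+1} = ∑_{ℓ=-1}^q A_ℓ(X_k) X_{k+1}^{ℓ+1}` :
    (hXeq : Xk1 = ∑ ℓ ∈ Finset.range (p + 1), (∑' i, Aℓ ℓ i * Xk ^ i) * Xk1 ^ ℓ) :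
    G - Xk1 =
      (∑ ℓ ∈ Finset.range (p + 1), (∑' i, Aℓ ℓ i * G ^ i) *
          ∑ j ∈ Finset.range ℓ, G ^ j * (G - Xk1) * Xk1 ^ (ℓ - 1 - j)) +
        ∑ ℓ ∈ Finset.range (p + 1), ∑' i,
          Aℓ ℓ (i + 1) *
            (∑ j ∈ Finset.range (i + 1), G ^ j * (G - Xk) * Xk ^ (i - j)) * Xk1 ^ ℓ := by
  rw [← sum_add_distrib]
  calc G - Xk1
      = ∑ ℓ ∈ range (p + 1),
          ((∑' i, Aℓ ℓ i * G ^ i) * G ^ ℓ - (∑' i, Aℓ ℓ i * Xk ^ i) * Xk1 ^ ℓ) := by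
        rw [sum_sub_distrib, ← hGeq, ← hXeq]
    _ = _ := sum_congr rfl fun ℓ _ =>
        tsum_mul_pow_mul_pow_sub_tsum_mul_pow_mul_pow (hsG ℓ) (hsX ℓ) Xk1 ℓ

/-- error recursion, Theorem 3.3 of the paper.  Here `A i` denotes
`A_{i-1}`, `p = q+1 ≥ 0`, and `Aℓ ℓ' i` denotes `A_{ℓ'-1, i}`; the matrix function
`A_ℓ(X)` is `∑' i, Aℓ ℓ' i * X ^ i`. -/
theorem stmt3 (m : ℕ) (hm : 1 ≤ m) (p : ℕ)
    (A : ℕ → Matrix (Fin m) (Fin m) ℝ)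
    (Aℓ : ℕ → ℕ → Matrix (Fin m) (Fin m) ℝ)
    (hA0 : ∀ i, Mle 0 (A i)) (hAℓ0 : ∀ ℓ i, Mle 0 (Aℓ ℓ i))
    (hsum : Summable A)
    (hcompat : ∀ i, A i = ∑ ℓ ∈ Finset.range (p + 1),
      if ℓ ≤ i then Aℓ ℓ (i - ℓ) else 0)
    (G Xk Xk1 : Matrix (Fin m) (Fin m) ℝ)
    -- all series occurring converge entrywise:
    (hsG : ∀ ℓ, Summable (fun i => Aℓ ℓ i * G ^ i))
    (hsX : ∀ ℓ, Summable (fun i => Aℓ ℓ i * Xk ^ i))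
    (hsS : ∀ ℓ, Summable (fun i =>
      Aℓ ℓ (i + 1) *
        (∑ j ∈ Finset.range (i + 1), G ^ j * (G - Xk) * Xk ^ (i - j)) * Xk1 ^ ℓ))
    -- `G = ∑_{ℓ=-1}^q A_ℓ(G) G^{ℓ+1}` :
    (hGeq : G = ∑ ℓ ∈ Finset.range (p + 1), (∑' i, Aℓ ℓ i * G ^ i) * G ^ ℓ)
    -- `X_{k+1} = ∑_{ℓ=-1}^q A_ℓ(X_k) X_{k+1}^{ℓ+1}` :
    (hXeq : Xk1 = ∑ ℓ ∈ Finset.range (p + 1), (∑' i, Aℓ ℓ i * Xk ^ i) * Xk1 ^ ℓ) :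
    G - Xk1 =
      (∑ ℓ ∈ Finset.range (p + 1), (∑' i, Aℓ ℓ i * G ^ i) *
          ∑ j ∈ Finset.range ℓ, G ^ j * (G - Xk1) * Xk1 ^ (ℓ - 1 - j)) +
        ∑ ℓ ∈ Finset.range (p + 1), ∑' i,
          Aℓ ℓ (i + 1) *
            (∑ j ∈ Finset.range (i + 1), G ^ j * (G - Xk) * Xk ^ (i - j)) * Xk1 ^ ℓ :=
  stmt3_general m p Aℓ G Xk Xk1 hsG hsX hGeq hXeq
end

section
/- With F = Σ_{ℓ=0}^q A_ℓ(G) Σ_{j=0}^ℓ G^j, M = I − F, N = Σ_{ℓ=−1}^q Σ_{i=1}^∞ A_{ℓ,i} Σ_{j=0}^{i−1} G^j, A_j^* = Σ_{r=j}^∞ A_r G^{r−j} for j ≥ 0 and V = Σ_{j=0}^∞ A_j^*, one has the matrix identity M − N = I − V, equivalently F + N = V. -/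
/-!
With `S n = ∑_{j<n} G^j`, both sides equal `∑ₙ A n * S n`. On the left, level `ℓ` contributes
`(∑ᵢ Aℓ ℓ i Gⁱ) S ℓ + ∑ᵢ Aℓ ℓ i S i = ∑ᵢ Aℓ ℓ i S (i + ℓ)` because `S (i + ℓ) = S i + Gⁱ S ℓ`;
reindexing by `n = i + ℓ` and summing over the levels regroups this into `∑ₙ A n S n` by the
compatibility relation. On the right, the double series `∑ⱼ ∑ₖ A (j + k + 1) Gᵏ` is summed along
the antidiagonals `j + k = n` instead, which is legitimate because all its terms are entrywise
nonnegative.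
-/

open Matrix

open Finset

lemma geom_sum_range_add {R : Type*} [Semiring R] (x : R) (a b : ℕ) :
    ∑ j ∈ range (a + b), x ^ j = ∑ j ∈ range a, x ^ j + x ^ a * ∑ j ∈ range b, x ^ j := by
  simp_rw [sum_range_add, mul_sum, pow_add]

lemma hasSum_shift_mul_geom_sum {R : Type*} [Ring R] [TopologicalSpace R] [IsTopologicalRing R]
    {B : ℕ → R} {x b c : R} (ℓ : ℕ)
    (hB : HasSum (fun i => B i * x ^ i) b)
    (hBS : HasSum (fun i => B (i + 1) * ∑ j ∈ range (i + 1), x ^ j) c) :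
    HasSum (fun n => (if ℓ ≤ n then B (n - ℓ) else 0) * ∑ j ∈ range n, x ^ j)
      (b * ∑ j ∈ range ℓ, x ^ j + c) := by
  have hBS₀ : HasSum (fun i => B i * ∑ j ∈ range i, x ^ j) c := by
    have := hBS.zero_add (f := fun i => B i * ∑ j ∈ range i, x ^ j)
    rwa [sum_range_zero, mul_zero, zero_add] at this
  have hlow : ∑ n ∈ range ℓ, (if ℓ ≤ n then B (n - ℓ) else 0) * ∑ j ∈ range n, x ^ j = 0 :=
    sum_eq_zero fun n hn => by rw [if_neg (mem_range.mp hn).not_ge, zero_mul]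
  rw [← hasSum_nat_add_iff' ℓ, hlow, sub_zero]
  refine ((hB.mul_right (∑ j ∈ range ℓ, x ^ j)).add hBS₀).congr_fun fun i => ?_
  rw [if_pos (Nat.le_add_left ℓ i), Nat.add_sub_cancel, geom_sum_range_add,
    mul_add, mul_assoc, add_comm]

lemma summable_of_summable_sum_antidiagonal_of_nonneg {f : ℕ × ℕ → ℝ} (hf : ∀ p, 0 ≤ f p)
    (hdiag : Summable fun n => ∑ p ∈ antidiagonal n, f p) : Summable f := by
  rw [← HasAntidiagonal.sigmaAntidiagonalEquivProd.summable_iff]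
  refine (summable_sigma_of_nonneg fun _ => hf _).mpr ⟨fun n => .of_finite, ?_⟩
  simpa only [Function.comp_apply, HasAntidiagonal.sigmaAntidiagonalEquivProd_apply,
    Finset.tsum_subtype] using hdiag

lemma Matrix.tsum_tsum_eq_tsum_sum_antidiagonal_of_nonneg {ι κ : Type*}
    {f : ℕ × ℕ → Matrix ι κ ℝ} (hf : ∀ p i j, 0 ≤ f p i j)
    (hrow : ∀ j, Summable fun k => f (j, k))
    (hdiag : Summable fun n => ∑ p ∈ antidiagonal n, f p) :
    ∑' j, ∑' k, f (j, k) = ∑' n, ∑ p ∈ antidiagonal n, f p := by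
  have hf_summable : Summable f := by
    refine Pi.summable.mpr fun i => Pi.summable.mpr fun j => ?_
    refine summable_of_summable_sum_antidiagonal_of_nonneg (fun p => hf p i j) ?_
    simpa only [Matrix.sum_apply] using Pi.summable.mp (Pi.summable.mp hdiag i) j
  rw [← hf_summable.tsum_prod' hrow, ← HasAntidiagonal.sigmaAntidiagonalEquivProd.tsum_eq,
    Summable.tsum_sigma' (f := fun c => f (HasAntidiagonal.sigmaAntidiagonalEquivProd c))
      (fun _ => .of_finite)
      (HasAntidiagonal.sigmaAntidiagonalEquivProd.summable_iff.mpr hf_summable)]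
  simp only [HasAntidiagonal.sigmaAntidiagonalEquivProd_apply, Finset.tsum_subtype]

lemma sum_antidiagonal_mul_pow_snd {R : Type*} [Semiring R] (B : ℕ → R) (x : R) (n : ℕ) :
    ∑ p ∈ antidiagonal n, B (p.1 + p.2) * x ^ p.2 = B n * ∑ j ∈ range (n + 1), x ^ j := by
  rw [sum_congr rfl fun p hp => by rw [mem_antidiagonal.mp hp], ← mul_sum,
    ← Nat.sum_antidiagonal_swap, Nat.sum_antidiagonal_eq_sum_range_succ_mk]
  rfl

lemma mle_zero_mul {m : ℕ} {X Y : Matrix (Fin m) (Fin m) ℝ} (hX : Mle 0 X) (hY : Mle 0 Y) :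
    Mle 0 (X * Y) := fun i j =>
  show (0 : ℝ) ≤ ∑ k, X i k * Y k j from sum_nonneg fun k _ => mul_nonneg (hX i k) (hY k j)

lemma mle_zero_pow {m : ℕ} {X : Matrix (Fin m) (Fin m) ℝ} (hX : Mle 0 X) (k : ℕ) :
    Mle 0 (X ^ k) := by
  induction k with
  | zero => exact fun i j => by by_cases h : i = j <;> simp [h]
  | succ k ih => exact pow_succ X k ▸ mle_zero_mul ih hX

/-- Encoding: `A i` is `A_{i-1}`, `p = q + 1`, `Aℓ ℓ i` is `A_{ℓ-1,i}`, and
`A_j^* = ∑' k, A (j + k + 1) * G ^ k`. -/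
theorem stmt5_general (m : ℕ) (p : ℕ)
    (A : ℕ → Matrix (Fin m) (Fin m) ℝ)
    (Aℓ : ℕ → ℕ → Matrix (Fin m) (Fin m) ℝ)
    (hA0 : ∀ i, Mle 0 (A i))
    (hcompat : ∀ i, A i = ∑ ℓ ∈ Finset.range (p + 1),
      if ℓ ≤ i then Aℓ ℓ (i - ℓ) else 0)
    (G : Matrix (Fin m) (Fin m) ℝ) (hG : IsMinSol A G)
    -- all series occurring converge (absolutely) entrywise:
    (hsG : ∀ ℓ, Summable (fun i => Aℓ ℓ i * G ^ i))
    (hsN : ∀ ℓ, Summable (fun i => Aℓ ℓ (i + 1) * ∑ j ∈ Finset.range (i + 1), G ^ j))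
    (hsAstar : ∀ j, Summable (fun k => A (j + k + 1) * G ^ k)) :
    (∑ ℓ ∈ Finset.range (p + 1),
        (∑' i, Aℓ ℓ i * G ^ i) * ∑ j ∈ Finset.range ℓ, G ^ j) +
      (∑ ℓ ∈ Finset.range (p + 1),
        ∑' i, Aℓ ℓ (i + 1) * ∑ j ∈ Finset.range (i + 1), G ^ j) =
      (∑' j : ℕ, ∑' k : ℕ, A (j + k + 1) * G ^ k) ∧
    ((1 : Matrix (Fin m) (Fin m) ℝ) -
        ∑ ℓ ∈ Finset.range (p + 1),
          (∑' i, Aℓ ℓ i * G ^ i) * ∑ j ∈ Finset.range ℓ, G ^ j) -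
      (∑ ℓ ∈ Finset.range (p + 1),
        ∑' i, Aℓ ℓ (i + 1) * ∑ j ∈ Finset.range (i + 1), G ^ j) =
      1 - ∑' j : ℕ, ∑' k : ℕ, A (j + k + 1) * G ^ k := by
  have hF_add_N : HasSum (fun n => A n * ∑ j ∈ range n, G ^ j)
      ((∑ ℓ ∈ range (p + 1), (∑' i, Aℓ ℓ i * G ^ i) * ∑ j ∈ range ℓ, G ^ j) +
        ∑ ℓ ∈ range (p + 1), ∑' i, Aℓ ℓ (i + 1) * ∑ j ∈ range (i + 1), G ^ j) := by
    rw [← sum_add_distrib]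
    refine (hasSum_sum fun ℓ (_ : ℓ ∈ range (p + 1)) =>
      hasSum_shift_mul_geom_sum ℓ (hsG ℓ).hasSum (hsN ℓ).hasSum).congr_fun fun n => ?_
    rw [hcompat n, sum_mul]
  have hV : ∑' j, ∑' k, A (j + k + 1) * G ^ k = ∑' n, A n * ∑ j ∈ range n, G ^ j := by
    rw [hF_add_N.summable.tsum_eq_zero_add, sum_range_zero, mul_zero, zero_add,
      Matrix.tsum_tsum_eq_tsum_sum_antidiagonal_of_nonneg
        (f := fun q => A (q.1 + q.2 + 1) * G ^ q.2)
        (fun q => mle_zero_mul (hA0 _) (mle_zero_pow hG.1 _)) hsAstar]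
    · exact tsum_congr fun n => sum_antidiagonal_mul_pow_snd (fun i => A (i + 1)) G n
    · simpa only [sum_antidiagonal_mul_pow_snd (fun i => A (i + 1)) G] using
        (summable_nat_add_iff 1).mpr hF_add_N.summable
  have hFN := hF_add_N.tsum_eq.symm.trans hV.symm
  exact ⟨hFN, by rw [sub_sub, hFN]⟩

/-- the identity `M - N = I - V`, equivalently `F + N = V`.  Here
`A i` denotes `A_{i-1}`, `p = q+1 ≥ 0`, `Aℓ ℓ' i` denotes `A_{ℓ'-1, i}`;
`A_j^* = ∑' k, A (j+k+1) * G^k` and `V = ∑' j, A_j^*`. -/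
theorem stmt5 (m : ℕ) (hm : 1 ≤ m) (p : ℕ)
    (A : ℕ → Matrix (Fin m) (Fin m) ℝ)
    (Aℓ : ℕ → ℕ → Matrix (Fin m) (Fin m) ℝ)
    (hA0 : ∀ i, Mle 0 (A i)) (hAℓ0 : ∀ ℓ i, Mle 0 (Aℓ ℓ i))
    (hsum : Summable A)
    (hrow : ∀ k, ∑ j, (∑' i, A i) k j ≤ 1)
    (hcompat : ∀ i, A i = ∑ ℓ ∈ Finset.range (p + 1),
      if ℓ ≤ i then Aℓ ℓ (i - ℓ) else 0)
    (G : Matrix (Fin m) (Fin m) ℝ) (hG : IsMinSol A G)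
    -- all series occurring converge (absolutely) entrywise:
    (hsG : ∀ ℓ, Summable (fun i => Aℓ ℓ i * G ^ i))
    (hsN : ∀ ℓ, Summable (fun i => Aℓ ℓ (i + 1) * ∑ j ∈ Finset.range (i + 1), G ^ j))
    (hsAstar : ∀ j, Summable (fun k => A (j + k + 1) * G ^ k))
    (hsV : Summable (fun j => ∑' k, A (j + k + 1) * G ^ k)) :
    (∑ ℓ ∈ Finset.range (p + 1),
        (∑' i, Aℓ ℓ i * G ^ i) * ∑ j ∈ Finset.range ℓ, G ^ j) +
      (∑ ℓ ∈ Finset.range (p + 1),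
        ∑' i, Aℓ ℓ (i + 1) * ∑ j ∈ Finset.range (i + 1), G ^ j) =
      (∑' j : ℕ, ∑' k : ℕ, A (j + k + 1) * G ^ k) ∧
    ((1 : Matrix (Fin m) (Fin m) ℝ) -
        ∑ ℓ ∈ Finset.range (p + 1),
          (∑' i, Aℓ ℓ i * G ^ i) * ∑ j ∈ Finset.range ℓ, G ^ j) -
      (∑ ℓ ∈ Finset.range (p + 1),
        ∑' i, Aℓ ℓ (i + 1) * ∑ j ∈ Finset.range (i + 1), G ^ j) =
      1 - ∑' j : ℕ, ∑' k : ℕ, A (j + k + 1) * G ^ k :=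
  stmt5_general m p A Aℓ hA0 hcompat G hG hsG hsN hsAstar
end

section
/- Assume ρ(V) < 1 (in the paper this holds when the drift of the Markov chain is negative). Then ρ(F) < 1, the matrix M = I − F is invertible with M⁻¹ ≥ 0 entrywise, N ≥ 0, so that H = I − V = M − N is a regular splitting of the nonsingular M-matrix H, and ρ(M⁻¹N) = ρ(H⁻¹N)/(1 + ρ(H⁻¹N)) < 1. -/
/-!
Reindexing the double series for `V` along antidiagonals gives `V = ∑ᵢ Aᵢ (I + G + ⋯ + G^{i-1})`,
and distributing each `Aᵢ` over the `A_{ℓ,i}` turns this into `F + N = V`. As `0 ≤ F ≤ V`,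
Gelfand's formula gives `ρ(F) ≤ ρ(V) < 1`, so `I - F` and `I - V` have nonnegative Neumann
inverses.

For `T = M⁻¹N` and `S = H⁻¹N` one has `(I - T)(I + S) = I`, so `λ ↦ λ / (1 - λ)` is a bijection
from the spectrum of `T` onto that of `S`. By the weak Perron–Frobenius theorem `ρ(T)` and `ρ(S)`
are themselves eigenvalues, which forces `ρ(T) = ρ(S) / (1 + ρ(S))`; `ρ(T) < 1` follows from
`T^(n+1) ≤ S` together with the invertibility of `I - T`.

Weak Perron–Frobenius: if `|z| = ρ(T)` is an eigenvalue with eigenvector `v`, then `x = |v|`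
satisfies `ρ(T) x ≤ T x`. For `t > ρ(T)` the resolvent `(t - T)⁻¹` is a nonnegative Neumann series,
and applying it gives `x ≤ (t - ρ(T)) (t - T)⁻¹ x`, i.e. `‖(t - T)⁻¹‖ ≥ 1 / (t - ρ(T))`. The
resolvent therefore blows up as `t ↓ ρ(T)`, so `ρ(T)` is in the spectrum.
-/

open Matrix

/-- The spectral radius of a real matrix, i.e. the supremum of the moduli of its
complex eigenvalues. -/
noncomputable def specRad {m : ℕ} (B : Matrix (Fin m) (Fin m) ℝ) : ENNReal :=
  spectralRadius ℂ (B.map (algebraMap ℝ ℂ))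

/-- `F = ∑_{ℓ=0}^q A_ℓ(G) ∑_{j=0}^ℓ G^j` (shifted index `ℓ' = ℓ+1 ∈ {0,…,p}`). -/
noncomputable def Fmat {m : ℕ} (p : ℕ) (Aℓ : ℕ → ℕ → Matrix (Fin m) (Fin m) ℝ)
    (G : Matrix (Fin m) (Fin m) ℝ) : Matrix (Fin m) (Fin m) ℝ :=
  ∑ ℓ ∈ Finset.range (p + 1), (∑' i, Aℓ ℓ i * G ^ i) * ∑ j ∈ Finset.range ℓ, G ^ j

/-- `N = ∑_{ℓ=-1}^q ∑_{i=1}^∞ A_{ℓ,i} ∑_{j=0}^{i-1} G^j`. -/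
noncomputable def Nmat {m : ℕ} (p : ℕ) (Aℓ : ℕ → ℕ → Matrix (Fin m) (Fin m) ℝ)
    (G : Matrix (Fin m) (Fin m) ℝ) : Matrix (Fin m) (Fin m) ℝ :=
  ∑ ℓ ∈ Finset.range (p + 1), ∑' i, Aℓ ℓ (i + 1) * ∑ j ∈ Finset.range (i + 1), G ^ j

/-- `V = ∑_{j=0}^∞ A_j^*` where `A_j^* = ∑_{r=j}^∞ A_r G^{r-j}` (shifted index). -/
noncomputable def Vmat {m : ℕ} (A : ℕ → Matrix (Fin m) (Fin m) ℝ)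
    (G : Matrix (Fin m) (Fin m) ℝ) : Matrix (Fin m) (Fin m) ℝ :=
  ∑' j : ℕ, ∑' k : ℕ, A (j + k + 1) * G ^ k

open Filter Topology
open scoped NNReal ENNReal

attribute [local instance] Matrix.linftyOpNormedAddCommGroup Matrix.linftyOpNormedRing
  Matrix.linftyOpNormedAlgebra

theorem summable_matrix_iff {ι l n R : Type*} [AddCommMonoid R] [TopologicalSpace R]
    {f : ι → Matrix l n R} : Summable f ↔ ∀ a b, Summable fun i => f i a b :=
  Pi.summable.trans (forall_congr' fun _ => Pi.summable)

theorem tsum_matrix_apply {ι l n R : Type*} [AddCommMonoid R] [TopologicalSpace R] [T2Space R]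
    {f : ι → Matrix l n R} (hf : Summable f) (a : l) (b : n) :
    (∑' i, f i) a b = ∑' i, f i a b := by
  rw [show (∑' i, f i) a = ∑' i, f i a from tsum_apply hf, tsum_apply (Pi.summable.1 hf a)]

theorem tsum_add_nat_of_eq_zero {α : Type*} [AddCommMonoid α] [TopologicalSpace α] {f : ℕ → α}
    {k : ℕ} (h : ∀ i < k, f i = 0) : ∑' i, f (i + k) = ∑' i, f i :=
  (add_left_injective k).tsum_eq fun i hi =>
    ⟨i - k, Nat.sub_add_cancel (not_lt.1 fun hik => hi (h i hik))⟩

open Finset.HasAntidiagonal in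
theorem Summable.tsum_prod_eq_tsum_sum_antidiagonal {α : Type*} [AddCommMonoid α]
    [TopologicalSpace α] [ContinuousAdd α] [T3Space α] {f : ℕ × ℕ → α} (hf : Summable f) :
    ∑' p, f p = ∑' n, ∑ p ∈ antidiagonal n, f p := by
  rw [← sigmaAntidiagonalEquivProd.tsum_eq f]
  exact ((sigmaAntidiagonalEquivProd.summable_iff.2 hf).tsum_sigma'
    fun n => (hasSum_fintype _).summable).trans
      (tsum_congr fun n => (tsum_fintype _).trans (Finset.sum_coe_sort _ _))

theorem geom_sum_add {R : Type*} [Semiring R] (x : R) (i k : ℕ) :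
    ∑ j ∈ Finset.range (i + k), x ^ j =
      ∑ j ∈ Finset.range i, x ^ j + x ^ i * ∑ j ∈ Finset.range k, x ^ j := by
  rw [Finset.sum_range_add, Finset.mul_sum]
  simp only [pow_add]

theorem spectrum_mem_iff_div_one_add {𝕜 A : Type*} [Field 𝕜] [Ring A] [Algebra 𝕜 A] {b c : A}
    (hcb : (1 + c) * (1 - b) = 1) (hbc : (1 - b) * (1 + c) = 1) {μ : 𝕜} (hμ : 1 + μ ≠ 0) :
    μ ∈ spectrum 𝕜 c ↔ μ / (1 + μ) ∈ spectrum 𝕜 b := by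
  have hc : (1 + c) * b = c := calc
    (1 + c) * b = 1 + c - (1 + c) * (1 - b) := by noncomm_ring
    _ = c := by rw [hcb]; abel
  have key : algebraMap 𝕜 A μ - c =
      ((1 + c) * algebraMap 𝕜 A (1 + μ)) * (algebraMap 𝕜 A (μ / (1 + μ)) - b) := by
    rw [mul_sub, mul_assoc, ← map_mul, mul_div_cancel₀ _ hμ, mul_assoc,
      Algebra.commutes (1 + μ) b, ← mul_assoc, hc, map_add, map_one]
    noncomm_ring
  have hunit : IsUnit ((1 + c) * algebraMap 𝕜 A (1 + μ)) :=
    IsUnit.mul ⟨⟨1 + c, 1 - b, hcb, hbc⟩, rfl⟩ ((isUnit_iff_ne_zero.2 hμ).map _)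
  rw [spectrum.mem_iff, spectrum.mem_iff, key, hunit.mul_left_iff]

theorem nnnorm_map_ofReal {l n : Type*} [Fintype l] [Fintype n] (X : Matrix l n ℝ) :
    ‖X.map (algebraMap ℝ ℂ)‖₊ = ‖X‖₊ := by
  simp [Matrix.linfty_opNNNorm_def]

variable {m : ℕ}

namespace Mle

variable {X Y X' Y' : Matrix (Fin m) (Fin m) ℝ}

theorem add_nonneg (hX : Mle 0 X) (hY : Mle 0 Y) : Mle 0 (X + Y) :=
  fun a b => _root_.add_nonneg (hX a b) (hY a b)

theorem le_add_of_nonneg_right (hY : Mle 0 Y) : Mle X (X + Y) :=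
  fun a b => _root_.le_add_of_nonneg_right (hY a b)

theorem le_add_of_nonneg_left (hX : Mle 0 X) : Mle Y (X + Y) :=
  fun a b => _root_.le_add_of_nonneg_left (hX a b)

theorem smul_nonneg {c : ℝ} (hc : 0 ≤ c) (hX : Mle 0 X) : Mle 0 (c • X) :=
  fun a b => _root_.mul_nonneg hc (hX a b)

theorem mul_le_mul (hX : Mle 0 X) (hXX' : Mle X X') (hY : Mle 0 Y) (hYY' : Mle Y Y') :
    Mle (X * Y) (X' * Y') := fun a b => by
  simp only [Matrix.mul_apply]
  exact Finset.sum_le_sum fun c _ =>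
    _root_.mul_le_mul (hXX' a c) (hYY' c b) (hY c b) ((hX a c).trans (hXX' a c))

theorem mul_nonneg (hX : Mle 0 X) (hY : Mle 0 Y) : Mle 0 (X * Y) := by
  simpa using mul_le_mul (fun _ _ => le_rfl) hX (fun _ _ => le_rfl) hY

theorem pow_nonneg (hX : Mle 0 X) (n : ℕ) : Mle 0 (X ^ n) := by
  induction n with
  | zero => intro a b; by_cases h : a = b <;> simp [h]
  | succ n ih => rw [pow_succ]; exact ih.mul_nonneg hX

theorem pow_le_pow_left (hX : Mle 0 X) (h : Mle X Y) (n : ℕ) : Mle (X ^ n) (Y ^ n) := by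
  induction n with
  | zero => exact fun _ _ => le_rfl
  | succ n ih =>
    rw [pow_succ, pow_succ]
    exact mul_le_mul (hX.pow_nonneg n) ih hX h

theorem sum_nonneg {ι : Type*} {s : Finset ι} {f : ι → Matrix (Fin m) (Fin m) ℝ}
    (h : ∀ i ∈ s, Mle 0 (f i)) : Mle 0 (∑ i ∈ s, f i) := fun a b => by
  rw [Matrix.sum_apply]
  exact Finset.sum_nonneg fun i hi => h i hi a b

theorem tsum_nonneg {ι : Type*} {f : ι → Matrix (Fin m) (Fin m) ℝ} (h : ∀ i, Mle 0 (f i)) :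
    Mle 0 (∑' i, f i) := fun a b => by
  by_cases hf : Summable f
  · rw [tsum_matrix_apply hf]
    exact _root_.tsum_nonneg fun i => h i a b
  · simp [tsum_eq_zero_of_not_summable hf]

theorem summable_prod {ι κ : Type*} {f : ι × κ → Matrix (Fin m) (Fin m) ℝ}
    (h0 : ∀ p, Mle 0 (f p)) (h1 : ∀ i, Summable fun k => f (i, k))
    (h2 : Summable fun i => ∑' k, f (i, k)) : Summable f := by
  refine summable_matrix_iff.2 fun a b => (summable_prod_of_nonneg fun p => h0 p a b).2
    ⟨fun i => summable_matrix_iff.1 (h1 i) a b, ?_⟩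
  simpa only [tsum_matrix_apply (h1 _)] using summable_matrix_iff.1 h2 a b

theorem mulVec_le_mulVec (hX : Mle 0 X) {v w : Fin m → ℝ} (h : v ≤ w) :
    X *ᵥ v ≤ X *ᵥ w := fun a => by
  simp only [Matrix.mulVec, dotProduct]
  exact Finset.sum_le_sum fun c _ => mul_le_mul_of_nonneg_left (h c) (hX a c)

theorem nnnorm_le (hX : Mle 0 X) (h : Mle X Y) : ‖X‖₊ ≤ ‖Y‖₊ := by
  simp only [Matrix.linfty_opNNNorm_def]
  refine Finset.sup_mono_fun fun a _ => Finset.sum_le_sum fun b _ => ?_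
  rw [← NNReal.coe_le_coe, coe_nnnorm, coe_nnnorm, Real.norm_of_nonneg (hX a b),
    Real.norm_of_nonneg ((hX a b).trans (h a b))]
  exact h a b

end Mle

section SpectralRadius

variable {X : Matrix (Fin m) (Fin m) ℝ}

theorem specRad_gelfand_formula (X : Matrix (Fin m) (Fin m) ℝ) :
    Tendsto (fun n : ℕ => (‖X ^ n‖₊ : ℝ≥0∞) ^ (1 / n : ℝ)) atTop (𝓝 (specRad X)) := by
  have h := spectrum.pow_nnnorm_pow_one_div_tendsto_nhds_spectralRadius (X.map (algebraMap ℝ ℂ))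
  simp only [← RingHom.mapMatrix_apply, ← map_pow] at h
  simp only [RingHom.mapMatrix_apply, nnnorm_map_ofReal] at h
  exact h

theorem specRad_mono {Y : Matrix (Fin m) (Fin m) ℝ} (hX : Mle 0 X) (h : Mle X Y) :
    specRad X ≤ specRad Y :=
  le_of_tendsto_of_tendsto' (specRad_gelfand_formula X) (specRad_gelfand_formula Y) fun n =>
    ENNReal.rpow_le_rpow (ENNReal.coe_le_coe.2 <|
      (hX.pow_nonneg n).nnnorm_le (hX.pow_le_pow_left h n)) (by positivity)

theorem eventually_nnnorm_pow_lt {q : ℝ≥0} (h : specRad X < q) :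
    ∀ᶠ n : ℕ in atTop, ‖X ^ n‖₊ < q ^ n := by
  filter_upwards [(specRad_gelfand_formula X).eventually_lt_const h,
    eventually_ge_atTop 1] with n hn hn1
  rw [one_div, ENNReal.rpow_inv_lt_iff (by positivity), ENNReal.rpow_natCast] at hn
  exact_mod_cast hn

theorem specRad_smul (c : ℝ) (X : Matrix (Fin m) (Fin m) ℝ) :
    specRad (c • X) = ‖c‖₊ * specRad X := by
  refine tendsto_nhds_unique (specRad_gelfand_formula (c • X)) <|
    (ENNReal.Tendsto.const_mul (specRad_gelfand_formula X) (Or.inr ENNReal.coe_ne_top)).congr' ?_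
  filter_upwards [eventually_ge_atTop 1] with n hn
  rw [smul_pow, nnnorm_smul, nnnorm_pow c, ENNReal.coe_mul, ENNReal.mul_rpow_of_nonneg _ _
    (by positivity), ENNReal.coe_pow, one_div, ENNReal.pow_rpow_inv_natCast (by omega)]

theorem summable_pow_of_specRad_lt_one (h : specRad X < 1) : Summable (X ^ ·) := by
  obtain ⟨q, hXq, hq1⟩ := ENNReal.lt_iff_exists_nnreal_btwn.1 h
  refine .of_norm_bounded_eventually_nat (summable_geometric_of_lt_one q.coe_nonneg
    (by exact_mod_cast hq1)) ?_
  filter_upwards [eventually_nnnorm_pow_lt hXq] with n hn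
  exact_mod_cast hn.le

theorem isUnit_one_sub_of_specRad_lt_one (h : specRad X < 1) : IsUnit (1 - X) :=
  .of_mul_eq_one _ (summable_pow_of_specRad_lt_one h).one_sub_mul_tsum_pow

theorem inv_one_sub_eq_tsum_pow (h : specRad X < 1) : (1 - X)⁻¹ = ∑' n, X ^ n :=
  Matrix.inv_eq_right_inv (summable_pow_of_specRad_lt_one h).one_sub_mul_tsum_pow

theorem Mle.inv_one_sub_nonneg (hX : Mle 0 X) (h : specRad X < 1) : Mle 0 (1 - X)⁻¹ := by
  rw [inv_one_sub_eq_tsum_pow h]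
  exact Mle.tsum_nonneg hX.pow_nonneg

theorem isUnit_map_ofReal_iff : IsUnit (X.map (algebraMap ℝ ℂ)) ↔ IsUnit X := by
  rw [Matrix.isUnit_iff_isUnit_det, Matrix.isUnit_iff_isUnit_det, ← RingHom.mapMatrix_apply,
    ← RingHom.map_det, isUnit_iff_ne_zero, isUnit_iff_ne_zero, map_ne_zero]

theorem ofReal_mem_spectrum_map_iff {μ : ℝ} :
    (μ : ℂ) ∈ spectrum ℂ (X.map (algebraMap ℝ ℂ)) ↔ μ ∈ spectrum ℝ X := by
  have h : algebraMap ℂ _ (μ : ℂ) - X.map (algebraMap ℝ ℂ) =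
      (algebraMap ℝ _ μ - X).map (algebraMap ℝ ℂ) := by
    ext a b
    by_cases hab : a = b <;> simp [Matrix.algebraMap_matrix_apply, hab]
  rw [spectrum.mem_iff, spectrum.mem_iff, h, isUnit_map_ofReal_iff]

theorem nnnorm_le_specRad {μ : ℝ} (h : μ ∈ spectrum ℝ X) : (‖μ‖₊ : ℝ≥0∞) ≤ specRad X := by
  have := le_iSup₂ (f := fun (k : ℂ) (_ : k ∈ spectrum ℂ (X.map (algebraMap ℝ ℂ))) =>
    (‖k‖₊ : ℝ≥0∞)) (μ : ℂ) (ofReal_mem_spectrum_map_iff.2 h)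
  rwa [Complex.nnnorm_real] at this

end SpectralRadius

section PerronFrobenius

variable {T : Matrix (Fin m) (Fin m) ℝ}

theorem exists_nonneg_smul_le_mulVec (hT : Mle 0 T) {z : ℂ}
    (hz : z ∈ spectrum ℂ (T.map (algebraMap ℝ ℂ))) :
    ∃ x : Fin m → ℝ, 0 ≤ x ∧ x ≠ 0 ∧ ‖z‖ • x ≤ T *ᵥ x := by
  rw [spectrum.mem_iff, Algebra.algebraMap_eq_smul_one, Matrix.isUnit_iff_isUnit_det,
    isUnit_iff_ne_zero, not_not, ← exists_mulVec_eq_zero_iff] at hz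
  obtain ⟨v, hv0, hv⟩ := hz
  rw [Matrix.sub_mulVec, Matrix.smul_mulVec, Matrix.one_mulVec, sub_eq_zero] at hv
  refine ⟨fun j => ‖v j‖, fun j => norm_nonneg _,
    fun h => hv0 (funext fun j => norm_eq_zero.1 (congrFun h j)), fun i => ?_⟩
  calc ‖z‖ * ‖v i‖ = ‖∑ j, (T i j : ℂ) * v j‖ := by
        rw [← norm_mul, ← smul_eq_mul, ← Pi.smul_apply, hv]; rfl
    _ ≤ ∑ j, T i j * ‖v j‖ := (norm_sum_le _ _).trans_eq <| Finset.sum_congr rfl fun j _ => by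
        rw [norm_mul, Complex.norm_real, Real.norm_of_nonneg (hT i j)]

theorem one_le_norm_of_le_mulVec {R : Matrix (Fin m) (Fin m) ℝ} {x : Fin m → ℝ} (hx0 : 0 ≤ x)
    (hx : x ≠ 0) (h : x ≤ R *ᵥ x) : 1 ≤ ‖R‖ := by
  have hxR : ‖x‖ ≤ ‖R *ᵥ x‖ := (pi_norm_le_iff_of_nonneg (norm_nonneg _)).2 fun i =>
    (Real.norm_of_nonneg (hx0 i)).trans_le <| (h i).trans <|
      (le_abs_self _).trans <| norm_le_pi_norm (R *ᵥ x) i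
  have := hxR.trans (Matrix.linfty_opNorm_mulVec R x)
  exact le_of_mul_le_mul_right (by simpa using this) (norm_pos_iff.2 hx)

theorem mem_resolventSet_and_resolvent_nonneg (hT : Mle 0 T) {t : ℝ}
    (ht : specRad T < ENNReal.ofReal t) : t ∈ resolventSet ℝ T ∧ Mle 0 (resolvent T t) := by
  have ht0 : 0 < t := ENNReal.ofReal_pos.1 (pos_of_gt ht)
  have hX : specRad (t⁻¹ • T) < 1 := by
    rwa [specRad_smul, nnnorm_inv, ENNReal.coe_inv (by simp [ht0.ne']), ← ENNReal.div_eq_inv_mul,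
      ENNReal.div_lt_iff (by simp [ht0.ne']) (by simp), one_mul, ← enorm_eq_nnnorm,
      Real.enorm_of_nonneg ht0.le]
  have hfac : algebraMap ℝ _ t - T = t • (1 - t⁻¹ • T) := by
    rw [smul_sub, smul_smul, mul_inv_cancel₀ ht0.ne', one_smul, Algebra.algebraMap_eq_smul_one]
  have hmul : (algebraMap ℝ _ t - T) * (t⁻¹ • ∑' n, (t⁻¹ • T) ^ n) = 1 := by
    rw [hfac, smul_mul_smul_comm, mul_inv_cancel₀ ht0.ne', one_smul,
      (summable_pow_of_specRad_lt_one hX).one_sub_mul_tsum_pow]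
  refine ⟨.of_mul_eq_one _ hmul, ?_⟩
  rw [resolvent, ← Matrix.nonsing_inv_eq_ringInverse, Matrix.inv_eq_right_inv hmul]
  exact (Mle.tsum_nonneg ((hT.smul_nonneg (inv_nonneg.2 ht0.le)).pow_nonneg)).smul_nonneg
    (inv_nonneg.2 ht0.le)

theorem one_le_mul_norm_resolvent (hT : Mle 0 T) {x : Fin m → ℝ} (hx0 : 0 ≤ x) (hx : x ≠ 0)
    {r t : ℝ} (hTx : r • x ≤ T *ᵥ x) (hrt : r ≤ t) (ht : specRad T < ENNReal.ofReal t) :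
    1 ≤ (t - r) * ‖resolvent T t‖ := by
  obtain ⟨hmem, hR⟩ := mem_resolventSet_and_resolvent_nonneg hT ht
  have hRinv : resolvent T t * (algebraMap ℝ _ t - T) = 1 := Ring.inverse_mul_cancel _ hmem
  have hle : (algebraMap ℝ _ t - T) *ᵥ x ≤ (t - r) • x := fun i => by
    have := hTx i
    simp only [Algebra.algebraMap_eq_smul_one, Matrix.sub_mulVec, Matrix.smul_mulVec,
      Matrix.one_mulVec, Pi.sub_apply, Pi.smul_apply, smul_eq_mul] at this ⊢
    linarith
  have hxR : x ≤ ((t - r) • resolvent T t) *ᵥ x := calc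
    x = resolvent T t *ᵥ ((algebraMap ℝ _ t - T) *ᵥ x) := by
      rw [Matrix.mulVec_mulVec, hRinv, Matrix.one_mulVec]
    _ ≤ resolvent T t *ᵥ ((t - r) • x) := hR.mulVec_le_mulVec hle
    _ = ((t - r) • resolvent T t) *ᵥ x := by rw [Matrix.mulVec_smul, Matrix.smul_mulVec]
  simpa [norm_smul, abs_of_nonneg (sub_nonneg.2 hrt)] using one_le_norm_of_le_mulVec hx0 hx hxR

theorem specRad_toReal_mem_spectrum [Nonempty (Fin m)] (hT : Mle 0 T) :
    (specRad T).toReal ∈ spectrum ℝ T := by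
  obtain ⟨z, hz, hzT⟩ := spectrum.exists_nnnorm_eq_spectralRadius (T.map (algebraMap ℝ ℂ))
  obtain ⟨x, hx0, hx, hTx⟩ := exists_nonneg_smul_le_mulVec hT hz
  have hT_eq : specRad T = ENNReal.ofReal ‖z‖ := by
    rw [specRad, ← hzT, ← coe_nnnorm, ENNReal.ofReal_coe_nnreal]
  rw [hT_eq, ENNReal.toReal_ofReal (norm_nonneg z)]
  by_contra hres
  have hcont : ContinuousAt (resolvent T) ‖z‖ :=
    (spectrum.hasDerivAt_resolvent_const_left (not_not.1 hres)).continuousAt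
  have hlim : Tendsto (fun t => (t - ‖z‖) * ‖resolvent T t‖) (𝓝[>] ‖z‖) (𝓝 0) := by
    have := ((continuous_sub_right ‖z‖).tendsto ‖z‖).mul hcont.norm.tendsto
    simpa using this.mono_left nhdsWithin_le_nhds
  have hge : ∀ᶠ t in 𝓝[>] ‖z‖, 1 ≤ (t - ‖z‖) * ‖resolvent T t‖ :=
    eventually_nhdsWithin_of_forall fun t ht => one_le_mul_norm_resolvent hT hx0 hx hTx ht.le
      (hT_eq ▸ (ENNReal.ofReal_lt_ofReal_iff_of_nonneg (norm_nonneg z)).2 ht)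
  exact one_ne_zero (le_antisymm (ge_of_tendsto hlim hge) zero_le_one)

end PerronFrobenius

theorem pow_succ_le_of_mul_eq_one {T S : Matrix (Fin m) (Fin m) ℝ} (hT : Mle 0 T)
    (hS : Mle 0 S) (h : (1 - T) * (1 + S) = 1) (n : ℕ) : Mle (T ^ (n + 1)) S := by
  have hST : S = T + T * S := calc
    S = (1 - T) * (1 + S) - 1 + T + T * S := by noncomm_ring
    _ = T + T * S := by rw [h]; abel
  have hTS : Mle T S := by
    simpa only [← hST] using Mle.le_add_of_nonneg_right (X := T) (hT.mul_nonneg hS)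
  have hTSS : Mle (T * S) S := by
    simpa only [← hST] using Mle.le_add_of_nonneg_left (Y := T * S) hT
  induction n with
  | zero => rwa [pow_one]
  | succ n ih =>
    rw [pow_succ']
    exact fun a b =>
      (Mle.mul_le_mul hT (fun _ _ => le_rfl) (hT.pow_nonneg _) ih a b).trans (hTSS a b)

section RegularSplitting

variable [Nonempty (Fin m)]

attribute [local instance] Matrix.linfty_opNormOneClass

theorem specRad_ne_top (X : Matrix (Fin m) (Fin m) ℝ) : specRad X ≠ ⊤ :=
  ne_top_of_le_ne_top ENNReal.coe_ne_top (spectrum.spectralRadius_le_nnnorm _)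

theorem le_specRad_toReal {μ : ℝ} {X : Matrix (Fin m) (Fin m) ℝ} (h : μ ∈ spectrum ℝ X) :
    μ ≤ (specRad X).toReal :=
  (Real.le_norm_self μ).trans <| by
    simpa using ENNReal.toReal_mono (specRad_ne_top X) (nnnorm_le_specRad h)

theorem specRad_eq_div_one_add_of_mul_eq_one {T S : Matrix (Fin m) (Fin m) ℝ} (hT : Mle 0 T)
    (hS : Mle 0 S) (h : (1 - T) * (1 + S) = 1) :
    specRad T < 1 ∧ specRad T = specRad S / (1 + specRad S) := by
  have h' : (1 + S) * (1 - T) = 1 := mul_eq_one_comm.1 h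
  have hr := specRad_toReal_mem_spectrum hT
  have hs := specRad_toReal_mem_spectrum hS
  have hpow : ∀ n, (specRad (T ^ (n + 1))).toReal ≤ (specRad S).toReal := fun n =>
    ENNReal.toReal_mono (specRad_ne_top S)
      (specRad_mono (hT.pow_nonneg _) (pow_succ_le_of_mul_eq_one hT hS h n))
  rw [← ENNReal.ofReal_toReal (specRad_ne_top T), ← ENNReal.ofReal_toReal (specRad_ne_top S)]
  set r := (specRad T).toReal
  set s := (specRad S).toReal
  have hr0 : 0 ≤ r := ENNReal.toReal_nonneg
  have hs0 : 0 ≤ s := ENNReal.toReal_nonneg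
  have hr1 : r < 1 := by
    refine lt_of_le_of_ne (not_lt.1 fun h1r => ?_) fun hr1 => ?_
    · obtain ⟨n, hn⟩ := pow_unbounded_of_one_lt s h1r
      exact hn.not_ge <| (pow_le_pow_right₀ h1r.le n.le_succ).trans <|
        (le_specRad_toReal (spectrum.pow_mem_pow T (n + 1) hr)).trans (hpow n)
    · rw [hr1] at hr
      exact spectrum.mem_iff.1 hr (by rw [map_one]; exact ⟨⟨1 - T, 1 + S, h, h'⟩, rfl⟩)
  have hrs : r / (1 - r) ≤ s := by
    have h1r : 0 < 1 - r := sub_pos.2 hr1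
    refine le_specRad_toReal <|
      (spectrum_mem_iff_div_one_add h' h (μ := r / (1 - r)) (by positivity)).2 ?_
    convert hr using 1
    field_simp
    ring
  have hsr : s / (1 + s) ≤ r :=
    le_specRad_toReal ((spectrum_mem_iff_div_one_add h' h (by positivity)).1 hs)
  have hrs' : r = s / (1 + s) := by
    rw [div_le_iff₀ (sub_pos.2 hr1)] at hrs
    rw [div_le_iff₀ (by positivity)] at hsr
    rw [_root_.eq_div_iff (by positivity)]
    nlinarith
  refine ⟨ENNReal.ofReal_lt_one.2 hr1, ?_⟩
  rw [hrs', ENNReal.ofReal_div_of_pos (by positivity), ENNReal.ofReal_add zero_le_one hs0,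
    ENNReal.ofReal_one]

theorem specRad_inv_mul_of_regularSplitting {M N : Matrix (Fin m) (Fin m) ℝ} (hM : IsUnit M)
    (hMinv : Mle 0 M⁻¹) (hN : Mle 0 N) (hH : IsUnit (M - N)) (hHinv : Mle 0 (M - N)⁻¹) :
    specRad (M⁻¹ * N) < 1 ∧
      specRad (M⁻¹ * N) = specRad ((M - N)⁻¹ * N) / (1 + specRad ((M - N)⁻¹ * N)) := by
  have hM' := (Matrix.isUnit_iff_isUnit_det M).1 hM
  have hH' := (Matrix.isUnit_iff_isUnit_det (M - N)).1 hH
  refine specRad_eq_div_one_add_of_mul_eq_one (hMinv.mul_nonneg hN) (hHinv.mul_nonneg hN) ?_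
  have h1 : 1 - M⁻¹ * N = M⁻¹ * (M - N) := by rw [mul_sub, Matrix.nonsing_inv_mul _ hM']
  have h2 : 1 + (M - N)⁻¹ * N = (M - N)⁻¹ * M := by
    rw [← Matrix.nonsing_inv_mul _ hH', ← mul_add, sub_add_cancel]
  rw [h1, h2, mul_assoc, ← mul_assoc (M - N), Matrix.mul_nonsing_inv _ hH', one_mul,
    Matrix.nonsing_inv_mul _ hM']

end RegularSplitting

theorem hasSum_ite_mul_geom_sum (a : ℕ → Matrix (Fin m) (Fin m) ℝ) (G : Matrix (Fin m) (Fin m) ℝ)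
    (ℓ : ℕ) (ha : Summable fun i => a i * G ^ i)
    (hb : Summable fun i => a (i + 1) * ∑ j ∈ Finset.range (i + 1), G ^ j) :
    HasSum (fun i => (if ℓ ≤ i then a (i - ℓ) else 0) * ∑ j ∈ Finset.range i, G ^ j)
      ((∑' i, a i * G ^ i) * (∑ j ∈ Finset.range ℓ, G ^ j) +
        ∑' i, a (i + 1) * ∑ j ∈ Finset.range (i + 1), G ^ j) := by
  have hshift : ∀ i, (if ℓ ≤ i + ℓ then a (i + ℓ - ℓ) else 0) *
      ∑ j ∈ Finset.range (i + ℓ), G ^ j =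
      a i * G ^ i * ∑ j ∈ Finset.range ℓ, G ^ j + a i * ∑ j ∈ Finset.range i, G ^ j := by
    intro i
    rw [if_pos (Nat.le_add_left ℓ i), Nat.add_sub_cancel, geom_sum_add, mul_add, add_comm,
      mul_assoc]
  have hb' : Summable fun i => a i * ∑ j ∈ Finset.range i, G ^ j :=
    (summable_nat_add_iff 1).1 hb
  have hs : Summable fun i => (if ℓ ≤ i then a (i - ℓ) else 0) * ∑ j ∈ Finset.range i, G ^ j :=
    (summable_nat_add_iff ℓ).1 <| (summable_congr hshift).2 ((ha.mul_right _).add hb')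
  rw [hs.hasSum_iff, ← tsum_add_nat_of_eq_zero (k := ℓ) fun i hi => by simp [not_le.2 hi],
    tsum_congr hshift, (ha.mul_right _).tsum_add hb', ha.tsum_mul_right,
    ← tsum_add_nat_of_eq_zero (k := 1) (f := fun i => a i * ∑ j ∈ Finset.range i, G ^ j)
      (by simp)]

section Splitting

variable (p : ℕ) {A : ℕ → Matrix (Fin m) (Fin m) ℝ} {Aℓ : ℕ → ℕ → Matrix (Fin m) (Fin m) ℝ}
  {G : Matrix (Fin m) (Fin m) ℝ}

theorem Vmat_eq_tsum_mul_geom_sum (hA0 : ∀ i, Mle 0 (A i)) (hG0 : Mle 0 G)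
    (hsAstar : ∀ j, Summable fun k => A (j + k + 1) * G ^ k)
    (hsV : Summable fun j => ∑' k, A (j + k + 1) * G ^ k) :
    Vmat A G = ∑' i, A i * ∑ j ∈ Finset.range i, G ^ j := by
  have hf : Summable fun p : ℕ × ℕ => A (p.1 + p.2 + 1) * G ^ p.2 :=
    Mle.summable_prod (fun _ => (hA0 _).mul_nonneg (hG0.pow_nonneg _)) hsAstar hsV
  rw [Vmat, ← hf.tsum_prod' hsAstar, hf.tsum_prod_eq_tsum_sum_antidiagonal,
    ← tsum_add_nat_of_eq_zero (f := fun i => A i * ∑ j ∈ Finset.range i, G ^ j) (k := 1)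
      (by simp)]
  refine tsum_congr fun n => ?_
  rw [Finset.sum_congr rfl fun p hp => by rw [Finset.HasAntidiagonal.mem_antidiagonal.1 hp],
    ← Finset.mul_sum, ← Finset.Nat.sum_antidiagonal_swap]
  simpa using congrArg (A (n + 1) * ·)
    (Finset.Nat.sum_antidiagonal_eq_sum_range_succ (fun i _ => G ^ i) n)

theorem Fmat_add_Nmat_eq_tsum_mul_geom_sum
    (hcompat : ∀ i, A i = ∑ ℓ ∈ Finset.range (p + 1), if ℓ ≤ i then Aℓ ℓ (i - ℓ) else 0)
    (hsG : ∀ ℓ, Summable fun i => Aℓ ℓ i * G ^ i)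
    (hsN : ∀ ℓ, Summable fun i => Aℓ ℓ (i + 1) * ∑ j ∈ Finset.range (i + 1), G ^ j) :
    Fmat p Aℓ G + Nmat p Aℓ G = ∑' i, A i * ∑ j ∈ Finset.range i, G ^ j := by
  rw [Fmat, Nmat, ← Finset.sum_add_distrib,
    ← (hasSum_sum fun ℓ _ => hasSum_ite_mul_geom_sum (Aℓ ℓ) G ℓ (hsG ℓ) (hsN ℓ)).tsum_eq]
  exact tsum_congr fun i => by rw [hcompat, Finset.sum_mul]

theorem Fmat_nonneg (hAℓ0 : ∀ ℓ i, Mle 0 (Aℓ ℓ i)) (hG0 : Mle 0 G) : Mle 0 (Fmat p Aℓ G) :=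
  Mle.sum_nonneg fun ℓ _ =>
    (Mle.tsum_nonneg fun i => (hAℓ0 ℓ i).mul_nonneg (hG0.pow_nonneg i)).mul_nonneg
      (Mle.sum_nonneg fun j _ => hG0.pow_nonneg j)

theorem Nmat_nonneg (hAℓ0 : ∀ ℓ i, Mle 0 (Aℓ ℓ i)) (hG0 : Mle 0 G) : Mle 0 (Nmat p Aℓ G) :=
  Mle.sum_nonneg fun ℓ _ => Mle.tsum_nonneg fun _ =>
    (hAℓ0 ℓ _).mul_nonneg (Mle.sum_nonneg fun j _ => hG0.pow_nonneg j)

end Splitting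

theorem stmt6_general (m : ℕ) (hm : 1 ≤ m) (p : ℕ)
    (A : ℕ → Matrix (Fin m) (Fin m) ℝ)
    (Aℓ : ℕ → ℕ → Matrix (Fin m) (Fin m) ℝ)
    (hA0 : ∀ i, Mle 0 (A i)) (hAℓ0 : ∀ ℓ i, Mle 0 (Aℓ ℓ i))
    (hcompat : ∀ i, A i = ∑ ℓ ∈ Finset.range (p + 1),
      if ℓ ≤ i then Aℓ ℓ (i - ℓ) else 0)
    (G : Matrix (Fin m) (Fin m) ℝ) (hG : IsMinSol A G)
    -- all series occurring converge entrywise: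
    (hsG : ∀ ℓ, Summable (fun i => Aℓ ℓ i * G ^ i))
    (hsN : ∀ ℓ, Summable (fun i => Aℓ ℓ (i + 1) * ∑ j ∈ Finset.range (i + 1), G ^ j))
    (hsAstar : ∀ j, Summable (fun k => A (j + k + 1) * G ^ k))
    (hsV : Summable (fun j => ∑' k, A (j + k + 1) * G ^ k))
    -- `ρ(V) < 1` :
    (hρ : specRad (Vmat A G) < 1) :
    specRad (Fmat p Aℓ G) < 1 ∧
    IsUnit ((1 : Matrix (Fin m) (Fin m) ℝ) - Fmat p Aℓ G) ∧
    Mle 0 ((1 - Fmat p Aℓ G)⁻¹) ∧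
    Mle 0 (Nmat p Aℓ G) ∧
    (1 - Fmat p Aℓ G) - Nmat p Aℓ G = 1 - Vmat A G ∧
    IsUnit ((1 : Matrix (Fin m) (Fin m) ℝ) - Vmat A G) ∧
    specRad ((1 - Fmat p Aℓ G)⁻¹ * Nmat p Aℓ G) =
      specRad ((1 - Vmat A G)⁻¹ * Nmat p Aℓ G) /
        (1 + specRad ((1 - Vmat A G)⁻¹ * Nmat p Aℓ G)) ∧
    specRad ((1 - Fmat p Aℓ G)⁻¹ * Nmat p Aℓ G) < 1 := by
  have : Nonempty (Fin m) := ⟨⟨0, hm⟩⟩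
  have hG0 : Mle 0 G := hG.1
  have hFN : Fmat p Aℓ G + Nmat p Aℓ G = Vmat A G := by
    rw [Fmat_add_Nmat_eq_tsum_mul_geom_sum p hcompat hsG hsN,
      Vmat_eq_tsum_mul_geom_sum hA0 hG0 hsAstar hsV]
  have hF0 := Fmat_nonneg p hAℓ0 hG0
  have hN0 := Nmat_nonneg p hAℓ0 hG0
  have hV0 : Mle 0 (Vmat A G) := hFN ▸ hF0.add_nonneg hN0
  have hρF : specRad (Fmat p Aℓ G) < 1 :=
    (specRad_mono hF0 (hFN ▸ Mle.le_add_of_nonneg_right hN0)).trans_lt hρ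
  have hH : 1 - Fmat p Aℓ G - Nmat p Aℓ G = 1 - Vmat A G := by rw [← hFN]; abel
  obtain ⟨hlt, heq⟩ := specRad_inv_mul_of_regularSplitting
    (isUnit_one_sub_of_specRad_lt_one hρF) (hF0.inv_one_sub_nonneg hρF) hN0
    (hH ▸ isUnit_one_sub_of_specRad_lt_one hρ) (hH ▸ hV0.inv_one_sub_nonneg hρ)
  rw [hH] at heq
  exact ⟨hρF, isUnit_one_sub_of_specRad_lt_one hρF, hF0.inv_one_sub_nonneg hρF, hN0, hH,
    isUnit_one_sub_of_specRad_lt_one hρ, heq, hlt⟩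

/-- regular splitting properties, Theorem 3.4 of the paper. -/
theorem stmt6 (m : ℕ) (hm : 1 ≤ m) (p : ℕ)
    (A : ℕ → Matrix (Fin m) (Fin m) ℝ)
    (Aℓ : ℕ → ℕ → Matrix (Fin m) (Fin m) ℝ)
    (hA0 : ∀ i, Mle 0 (A i)) (hAℓ0 : ∀ ℓ i, Mle 0 (Aℓ ℓ i))
    (hsum : Summable A)
    (hrow : ∀ k, ∑ j, (∑' i, A i) k j ≤ 1)
    (hcompat : ∀ i, A i = ∑ ℓ ∈ Finset.range (p + 1),
      if ℓ ≤ i then Aℓ ℓ (i - ℓ) else 0)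
    (G : Matrix (Fin m) (Fin m) ℝ) (hG : IsMinSol A G)
    -- all series occurring converge entrywise:
    (hsG : ∀ ℓ, Summable (fun i => Aℓ ℓ i * G ^ i))
    (hsN : ∀ ℓ, Summable (fun i => Aℓ ℓ (i + 1) * ∑ j ∈ Finset.range (i + 1), G ^ j))
    (hsAstar : ∀ j, Summable (fun k => A (j + k + 1) * G ^ k))
    (hsV : Summable (fun j => ∑' k, A (j + k + 1) * G ^ k))
    -- `ρ(V) < 1` :
    (hρ : specRad (Vmat A G) < 1) :
    specRad (Fmat p Aℓ G) < 1 ∧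
    IsUnit ((1 : Matrix (Fin m) (Fin m) ℝ) - Fmat p Aℓ G) ∧
    Mle 0 ((1 - Fmat p Aℓ G)⁻¹) ∧
    Mle 0 (Nmat p Aℓ G) ∧
    (1 - Fmat p Aℓ G) - Nmat p Aℓ G = 1 - Vmat A G ∧
    IsUnit ((1 : Matrix (Fin m) (Fin m) ℝ) - Vmat A G) ∧
    specRad ((1 - Fmat p Aℓ G)⁻¹ * Nmat p Aℓ G) =
      specRad ((1 - Vmat A G)⁻¹ * Nmat p Aℓ G) /
        (1 + specRad ((1 - Vmat A G)⁻¹ * Nmat p Aℓ G)) ∧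
    specRad ((1 - Fmat p Aℓ G)⁻¹ * Nmat p Aℓ G) < 1 :=
  stmt6_general m hm p A Aℓ hA0 hAℓ0 hcompat G hG hsG hsN hsAstar hsV hρ
end
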